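/- arXiv:0806.4052 — 3 statements merged into one kernel-verified Lean document; each statement's English description precedes it below -/
import Mathlib

section
/- If r is an element of a rotation group D on a three-dimensional real vector space V such that r maps the pair (half-plane ℝv + ℝ≥0 w, ray ℝ≥0 v) to the pair (ℝ(-v) + ℝ≥0 w, ℝ≥0 (-v)) for linearly independent vectors v, w, then r² = id and r v = -v. -/
/-- The ray (half-line) spanned by `v`: all nonnegative multiples of `v`. -/
def Ray' {V : Type*} [AddCommGroup V] [Module ℝ V] (v : V) : Set V :=
  {x | ∃ c : ℝ, 0 ≤ c ∧ x = c • v}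

/-- The half-plane `ℝ v + ℝ≥0 w`. -/
def HalfPlane {V : Type*} [AddCommGroup V] [Module ℝ V] (v w : V) : Set V :=
  {x | ∃ a b : ℝ, 0 ≤ b ∧ x = a • v + b • w}

/-- `D` is a rotation group: for any two pairs of (half-plane, ray on its boundary)
there is exactly one element of `D` mapping the first pair to the second. -/
def IsRotationGroup {V : Type*} [AddCommGroup V] [Module ℝ V]
    (D : Subgroup (V ≃ₗ[ℝ] V)) : Prop :=
  ∀ v w v' w' : V, LinearIndependent ℝ ![v, w] → LinearIndependent ℝ ![v', w'] →
    ∃! d : V ≃ₗ[ℝ] V, d ∈ D ∧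
      (d : V ≃ₗ[ℝ] V) '' HalfPlane v w = HalfPlane v' w' ∧
      (d : V ≃ₗ[ℝ] V) '' Ray' v = Ray' v'

/-- `w ⊥ v` : some rotation sends `w` to `-w` and fixes `v`. -/
def Perp {V : Type*} [AddCommGroup V] [Module ℝ V]
    (D : Subgroup (V ≃ₗ[ℝ] V)) (w v : V) : Prop :=
  ∃ r ∈ D, r w = -w ∧ r v = v

/-!
The square `r ^ 2` maps the pair `(ℝ v + ℝ≥0 w, ℝ≥0 v)` to itself, since `r` flips the ray twice and
leaves the half-plane (whose boundary line is the same for `v` and `-v`) in place; uniqueness in the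
definition of a rotation group then forces `r ^ 2 = 1`. Writing `r v = c • (-v)` with `c > 0`, this
gives `c ^ 2 • v = v`, so `c = 1`.
-/

section

variable {V : Type*} [AddCommGroup V] [Module ℝ V]

lemma image_ray (f : V ≃ₗ[ℝ] V) (v : V) : f '' Ray' v = Ray' (f v) := by
  ext x
  constructor
  · rintro ⟨y, ⟨c, hc, rfl⟩, rfl⟩
    exact ⟨c, hc, map_smul f c v⟩
  · rintro ⟨c, hc, rfl⟩
    exact ⟨c • v, ⟨c, hc, rfl⟩, map_smul f c v⟩

lemma halfPlane_neg_left (v w : V) : HalfPlane (-v) w = HalfPlane v w := by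
  ext x
  constructor
  · rintro ⟨a, b, hb, rfl⟩
    exact ⟨-a, b, hb, by simp⟩
  · rintro ⟨a, b, hb, rfl⟩
    exact ⟨-a, b, hb, by simp⟩

lemma ray_smul_of_pos {c : ℝ} (hc : 0 < c) (v : V) : Ray' (c • v) = Ray' v := by
  ext x
  constructor
  · rintro ⟨d, hd, rfl⟩
    exact ⟨d * c, by positivity, (mul_smul d c v).symm⟩
  · rintro ⟨d, hd, rfl⟩
    refine ⟨d / c, by positivity, ?_⟩
    rw [smul_smul, div_mul_cancel₀ _ hc.ne']

lemma exists_pos_smul_of_ray_eq {x y : V} (hx : x ≠ 0) (h : Ray' x = Ray' y) :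
    ∃ c : ℝ, 0 < c ∧ x = c • y := by
  obtain ⟨c, hc, rfl⟩ : x ∈ Ray' y := h ▸ ⟨1, zero_le_one, (one_smul ℝ x).symm⟩
  refine ⟨c, hc.lt_of_ne ?_, rfl⟩
  rintro rfl
  exact hx (zero_smul ℝ y)

lemma IsRotationGroup.eq_one_of_image_eq {D : Subgroup (V ≃ₗ[ℝ] V)} (hD : IsRotationGroup D)
    {v w : V} (hvw : LinearIndependent ℝ ![v, w]) {d : V ≃ₗ[ℝ] V} (hd : d ∈ D)
    (hH : d '' HalfPlane v w = HalfPlane v w) (hR : d '' Ray' v = Ray' v) : d = 1 := by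
  obtain ⟨e, -, he⟩ := hD v w v w hvw hvw
  rw [he d ⟨hd, hH, hR⟩, he 1 ⟨one_mem D, by simp, by simp⟩]

end

theorem stmt0_general {V : Type*} [AddCommGroup V] [Module ℝ V]
    (D : Subgroup (V ≃ₗ[ℝ] V)) (hD : IsRotationGroup D)
    (v w : V) (hvw : LinearIndependent ℝ ![v, w])
    (r : V ≃ₗ[ℝ] V) (hr : r ∈ D)
    (hH : (r : V ≃ₗ[ℝ] V) '' HalfPlane v w = HalfPlane (-v) w)
    (hR : (r : V ≃ₗ[ℝ] V) '' Ray' v = Ray' (-v)) :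
    r ^ 2 = 1 ∧ r v = -v := by
  have hv : v ≠ 0 := by simpa using hvw.ne_zero 0
  obtain ⟨c, hc, hrv⟩ : ∃ c : ℝ, 0 < c ∧ r v = c • -v :=
    exists_pos_smul_of_ray_eq (r.map_ne_zero_iff.mpr hv) (by rw [← image_ray, hR])
  have hsq : ⇑(r ^ 2) = r ∘ r := by rw [pow_two]; rfl
  have hRneg : r '' Ray' (-v) = Ray' v := by
    rw [image_ray, map_neg, hrv, smul_neg, neg_neg, ray_smul_of_pos hc]
  have hr2 : r ^ 2 = 1 := by
    refine hD.eq_one_of_image_eq hvw (pow_mem hr 2) ?_ ?_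
    · rw [hsq, Set.image_comp, hH, halfPlane_neg_left, hH, halfPlane_neg_left]
    · rw [hsq, Set.image_comp, hR, hRneg]
  have hcc : (c * c) • v = (1 : ℝ) • v := by
    have h := congrArg (· v) hr2
    simp only [hsq, Function.comp_apply, hrv, map_smul, map_neg, smul_neg, neg_neg, smul_smul] at h
    rw [h, one_smul]
    rfl
  have hc1 : c = 1 := by
    rcases mul_self_eq_one_iff.mp (smul_left_injective ℝ hv hcc) with h | h
    · exact h
    · linarith
  exact ⟨hr2, by rw [hrv, hc1, one_smul]⟩

theorem stmt0 {V : Type*} [AddCommGroup V] [Module ℝ V]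
    (hdim : Module.finrank ℝ V = 3)
    (D : Subgroup (V ≃ₗ[ℝ] V)) (hD : IsRotationGroup D)
    (v w : V) (hvw : LinearIndependent ℝ ![v, w])
    (r : V ≃ₗ[ℝ] V) (hr : r ∈ D)
    (hH : (r : V ≃ₗ[ℝ] V) '' HalfPlane v w = HalfPlane (-v) w)
    (hR : (r : V ≃ₗ[ℝ] V) '' Ray' v = Ray' (-v)) :
    r ^ 2 = 1 ∧ r v = -v :=
  stmt0_general D hD v w hvw r hr hH hR
end

section
/- For any nonzero vector v and any vector w in a three-dimensional real vector space with rotation group D, there is exactly one real number α_v(w) such that r_v w + w = α_v(w) · v, and the map w ↦ α_v(w) is a linear form on V taking the value 2 on v and the value 0 on every vector perpendicular to v. -/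
/-!
Given `w` independent of `v`, the rotation group contains an element `d` sending the half-plane
`ℝ v + ℝ≥0 w` with boundary ray `ℝ≥0 v` to `ℝ v + ℝ≥0 (-w)` with the same ray. Then `d²` preserves
the original pair, so `d² = 1` by uniqueness; comparing coefficients gives `d v = v` and
`d w = a • v - w`, i.e. `w - (a / 2) • v ⊥ v`. Hence `r_v w + w ∈ ℝ v` for every `w`, and the
coefficient is a linear form because `c ↦ c • v` is a linear isomorphism onto `ℝ v`.
-/

section

open Submodule

variable {V : Type*} [AddCommGroup V] [Module ℝ V]

lemma LinearMap.exists_forall_eq_smul_of_mem_span_singleton {R M N : Type*} [Ring R] [IsDomain R]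
    [AddCommGroup M] [Module R M] [AddCommGroup N] [Module R N] [Module.IsTorsionFree R N]
    (f : M →ₗ[R] N) {v : N} (hv : v ≠ 0) (hf : ∀ w, f w ∈ R ∙ v) :
    ∃ α : M →ₗ[R] R, ∀ w, f w = α w • v :=
  ⟨(LinearEquiv.coord R N v hv).toLinearMap ∘ₗ f.codRestrict _ hf,
    fun w => (LinearEquiv.coord_apply_smul R N v hv ⟨f w, hf w⟩).symm⟩

lemma image_halfPlane_eq (d : V ≃ₗ[ℝ] V) {v w v' w' : V} {p q r : ℝ} (hp : 0 < p) (hr : 0 < r)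
    (hdv : d v = p • v') (hdw : d w = q • v' + r • w') :
    d '' HalfPlane v w = HalfPlane v' w' := by
  ext x
  constructor
  · rintro ⟨y, ⟨a, b, hb, rfl⟩, rfl⟩
    refine ⟨a * p + b * q, b * r, by positivity, ?_⟩
    rw [map_add, map_smul, map_smul, hdv, hdw]
    module
  · rintro ⟨a, b, hb, rfl⟩
    refine ⟨((a - b / r * q) / p) • v + (b / r) • w, ⟨_, b / r, by positivity, rfl⟩, ?_⟩
    rw [map_add, map_smul, map_smul, hdv, hdw]
    match_scalars <;> field_simp; ring

lemma image_ray'_eq (d : V ≃ₗ[ℝ] V) {v v' : V} {p : ℝ} (hp : 0 < p) (hdv : d v = p • v') :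
    d '' Ray' v = Ray' v' := by
  ext x
  constructor
  · rintro ⟨y, ⟨c, hc, rfl⟩, rfl⟩
    exact ⟨c * p, by positivity, by rw [map_smul, hdv, mul_smul]⟩
  · rintro ⟨c, hc, rfl⟩
    refine ⟨(c / p) • v, ⟨c / p, by positivity, rfl⟩, ?_⟩
    rw [map_smul, hdv, smul_smul, div_mul_cancel₀ c hp.ne']

lemma exists_pos_smul_of_image_ray'_eq (d : V ≃ₗ[ℝ] V) {v v' : V} (hv : v ≠ 0)
    (h : d '' Ray' v = Ray' v') : ∃ c : ℝ, 0 < c ∧ d v = c • v' := by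
  obtain ⟨c, hc, hdv⟩ : d v ∈ Ray' v' := h ▸ ⟨v, ⟨1, zero_le_one, (one_smul ℝ v).symm⟩, rfl⟩
  refine ⟨c, hc.lt_of_ne ?_, hdv⟩
  rintro rfl
  exact hv (d.map_eq_zero_iff.mp (by rw [hdv, zero_smul]))

lemma exists_pos_smul_of_image_halfPlane_eq (d : V ≃ₗ[ℝ] V) {v w v' w' : V} {c : ℝ}
    (hind : LinearIndependent ℝ ![v, w]) (hc : c ≠ 0) (hdv : d v = c • v')
    (h : d '' HalfPlane v w = HalfPlane v' w') :
    ∃ a b : ℝ, 0 < b ∧ d w = a • v' + b • w' := by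
  obtain ⟨a, b, hb, hdw⟩ : d w ∈ HalfPlane v' w' :=
    h ▸ ⟨w, ⟨0, 1, zero_le_one, by rw [zero_smul, one_smul, zero_add]⟩, rfl⟩
  refine ⟨a, b, hb.lt_of_ne ?_, hdw⟩
  rintro rfl
  have : d ((-a) • v + c • w) = 0 := by
    rw [map_add, map_smul, map_smul, hdv, hdw]
    module
  exact hc (LinearIndependent.pair_iff.mp hind _ _ (d.map_eq_zero_iff.mp this)).2

namespace IsRotationGroup

variable {D : Subgroup (V ≃ₗ[ℝ] V)}

lemma eq_one_of_image_eq_s10 (hD : IsRotationGroup D) {v w : V} (hind : LinearIndependent ℝ ![v, w])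
    {d : V ≃ₗ[ℝ] V} (hdD : d ∈ D) (hH : d '' HalfPlane v w = HalfPlane v w)
    (hR : d '' Ray' v = Ray' v) : d = 1 :=
  (hD v w v w hind hind).unique ⟨hdD, hH, hR⟩
    ⟨one_mem D, by rw [LinearEquiv.coe_one, Set.image_id],
      by rw [LinearEquiv.coe_one, Set.image_id]⟩

lemma exists_perp_sub_smul (hD : IsRotationGroup D) {v w : V}
    (hind : LinearIndependent ℝ ![v, w]) : ∃ a : ℝ, Perp D (w - a • v) v := by
  have hv : v ≠ 0 := hind.ne_zero 0
  obtain ⟨d, ⟨hdD, hdH, hdR⟩, -⟩ :=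
    hD v w v (-w) hind (LinearIndependent.pair_neg_right_iff.mpr hind)
  obtain ⟨c, hc, hdv⟩ := exists_pos_smul_of_image_ray'_eq d hv hdR
  obtain ⟨a, b, hb, hdw⟩ := exists_pos_smul_of_image_halfPlane_eq d hind hc.ne' hdv hdH
  have hddv : d (d v) = (c * c) • v := by rw [hdv, map_smul, hdv, smul_smul]
  have hddw : d (d w) = (a * c - b * a) • v + (b * b) • w := by
    rw [hdw, map_add, map_smul, map_smul, map_neg, hdv, hdw]
    module
  have hdd : d * d = 1 := hD.eq_one_of_image_eq_s10 hind (mul_mem hdD hdD)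
    (image_halfPlane_eq _ (mul_pos hc hc) (mul_pos hb hb) hddv hddw)
    (image_ray'_eq _ (mul_pos hc hc) hddv)
  have hcoeff := LinearIndependent.pair_iff.mp hind (a * c - b * a) (b * b - 1) <| by
    have : d (d w) = w := congr($hdd w)
    rw [hddw] at this
    linear_combination (norm := module) this
  have hcc : c * c = 1 := smul_left_injective ℝ hv (by
    have : d (d v) = v := congr($hdd v)
    simpa [hddv] using this)
  obtain rfl : c = 1 := by nlinarith
  obtain rfl : b = 1 := by nlinarith [hcoeff.2]
  refine ⟨a / 2, d, hdD, ?_, by rw [hdv, one_smul]⟩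
  rw [map_sub, map_smul, hdw, hdv]
  module

lemma add_self_mem_span_singleton (hD : IsRotationGroup D) {v : V} (hv : v ≠ 0)
    {r : V ≃ₗ[ℝ] V} (hrv : r v = v) (hr : ∀ u : V, Perp D u v → r u = -u) (w : V) :
    r w + w ∈ ℝ ∙ v := by
  rw [mem_span_singleton]
  by_cases hind : LinearIndependent ℝ ![v, w]
  · obtain ⟨a, hperp⟩ := hD.exists_perp_sub_smul hind
    have hu := hr _ hperp
    rw [map_sub, map_smul, hrv] at hu
    exact ⟨2 * a, by linear_combination (norm := module) -hu⟩
  · obtain ⟨k, rfl⟩ := not_forall_not.mp ((LinearIndependent.pair_iff' hv).not.mp hind)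
    exact ⟨2 * k, by rw [map_smul, hrv]; module⟩

end IsRotationGroup

end

theorem stmt10_general {V : Type*} [AddCommGroup V] [Module ℝ V]
    (D : Subgroup (V ≃ₗ[ℝ] V)) (hD : IsRotationGroup D)
    (v : V) (hv : v ≠ 0)
    (rv : V ≃ₗ[ℝ] V) (hrv1 : rv v = v)
    (hrv2 : ∀ u : V, Perp D u v → rv u = -u) :
    (∀ w : V, ∃! a : ℝ, rv w + w = a • v) ∧
    (∃ α : V →ₗ[ℝ] ℝ, (∀ w : V, rv w + w = α w • v) ∧ α v = 2 ∧
      ∀ u : V, Perp D u v → α u = 0) := by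
  obtain ⟨α, hα⟩ := (rv.toLinearMap + LinearMap.id).exists_forall_eq_smul_of_mem_span_singleton hv
    (hD.add_self_mem_span_singleton hv hrv1 hrv2)
  have hα' : ∀ w, rv w + w = α w • v := hα
  have hcoeff : ∀ {w a}, rv w + w = a • v → α w = a := fun h =>
    smul_left_injective ℝ hv ((hα' _).symm.trans h)
  refine ⟨fun w => ⟨α w, hα' w, fun a ha => (hcoeff ha).symm⟩, α, hα', ?_, fun u hu => ?_⟩
  · exact hcoeff (by rw [hrv1, two_smul])
  · exact hcoeff (by rw [hrv2 u hu, neg_add_cancel, zero_smul])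

theorem stmt10 {V : Type*} [AddCommGroup V] [Module ℝ V]
    (hdim : Module.finrank ℝ V = 3)
    (D : Subgroup (V ≃ₗ[ℝ] V)) (hD : IsRotationGroup D)
    (v : V) (hv : v ≠ 0)
    (rv : V ≃ₗ[ℝ] V) (hrvD : rv ∈ D) (hrv1 : rv v = v)
    (hrv2 : ∀ u : V, Perp D u v → rv u = -u) :
    (∀ w : V, ∃! a : ℝ, rv w + w = a • v) ∧
    (∃ α : V →ₗ[ℝ] ℝ, (∀ w : V, rv w + w = α w • v) ∧ α v = 2 ∧
      ∀ u : V, Perp D u v → α u = 0) :=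
  stmt10_general D hD v hv rv hrv1 hrv2
end

section
/- Pythagorean theorem for rotation groups: let V be a three-dimensional real vector space with a rotation group D, and let v, w ∈ V be perpendicular in the sense that some rotation fixes v and sends w to -w. If v, w and v + w are carried by rotations to a·n, b·n and c·n respectively for some fixed vector n ≠ 0 and nonnegative reals a, b, c, then a² + b² = c². -/
open Module

section Flags

variable {V : Type*} [AddCommGroup V] [Module ℝ V]

theorem image_ray' {W F : Type*} [AddCommGroup W] [Module ℝ W] [FunLike F V W]
    [LinearMapClass F ℝ V W] (f : F) (v : V) : f '' Ray' v = Ray' (f v) := by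
  ext x
  constructor
  · rintro ⟨_, ⟨c, hc, rfl⟩, rfl⟩
    exact ⟨c, hc, map_smul f c v⟩
  · rintro ⟨c, hc, rfl⟩
    exact ⟨c • v, ⟨c, hc, rfl⟩, map_smul f c v⟩

theorem image_halfPlane {W F : Type*} [AddCommGroup W] [Module ℝ W] [FunLike F V W]
    [LinearMapClass F ℝ V W] (f : F) (v w : V) :
    f '' HalfPlane v w = HalfPlane (f v) (f w) := by
  ext x
  constructor
  · rintro ⟨_, ⟨a, b, hb, rfl⟩, rfl⟩
    exact ⟨a, b, hb, by simp⟩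
  · rintro ⟨a, b, hb, rfl⟩
    exact ⟨a • v + b • w, ⟨a, b, hb, rfl⟩, by simp⟩

theorem ray'_smul {τ : ℝ} (hτ : 0 < τ) (v : V) : Ray' (τ • v) = Ray' v := by
  ext x
  constructor
  · rintro ⟨c, hc, rfl⟩
    exact ⟨c * τ, by positivity, (mul_smul c τ v).symm⟩
  · rintro ⟨c, hc, rfl⟩
    exact ⟨c / τ, by positivity, by rw [smul_smul, div_mul_cancel₀ c hτ.ne']⟩

theorem halfPlane_smul_smul_add_smul {σ μ : ℝ} (hσ : σ ≠ 0) (hμ : 0 < μ) (t : ℝ) (v w : V) :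
    HalfPlane (σ • v) (μ • w + t • v) = HalfPlane v w := by
  ext x
  constructor
  · rintro ⟨a, b, hb, rfl⟩
    exact ⟨a * σ + b * t, b * μ, by positivity, by module⟩
  · rintro ⟨a, b, hb, rfl⟩
    refine ⟨(a - b / μ * t) / σ, b / μ, by positivity, ?_⟩
    match_scalars <;> field_simp; ring

def MapsFlag (d : V ≃ₗ[ℝ] V) (v w v' w' : V) : Prop :=
  d '' HalfPlane v w = HalfPlane v' w' ∧ d '' Ray' v = Ray' v'

theorem mapsFlag_of_apply {d : V ≃ₗ[ℝ] V} {v w v' w' : V} {σ μ : ℝ} (hσ : 0 < σ) (hμ : 0 < μ)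
    (t : ℝ) (hv : d v = σ • v') (hw : d w = μ • w' + t • v') : MapsFlag d v w v' w' := by
  refine ⟨?_, ?_⟩
  · rw [image_halfPlane, hv, hw, halfPlane_smul_smul_add_smul hσ.ne' hμ]
  · rw [image_ray', hv, ray'_smul hσ]

theorem MapsFlag.exists_apply_fst {d : V ≃ₗ[ℝ] V} {v w v' w' : V} (hd : MapsFlag d v w v' w')
    (hv : v ≠ 0) : ∃ σ : ℝ, 0 < σ ∧ d v = σ • v' := by
  obtain ⟨σ, hσ, hdv⟩ : d v ∈ Ray' v' := hd.2 ▸ Set.mem_image_of_mem d ⟨1, zero_le_one, by simp⟩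
  refine ⟨σ, hσ.lt_of_ne ?_, hdv⟩
  rintro rfl
  exact hv (by simpa using hdv)

theorem MapsFlag.exists_apply_snd {d : V ≃ₗ[ℝ] V} {v w v' w' : V} (hd : MapsFlag d v w v' w')
    (hvw : LinearIndependent ℝ ![v, w]) : ∃ μ : ℝ, 0 < μ ∧ ∃ t : ℝ, d w = μ • w' + t • v' := by
  have hv : v ≠ 0 := hvw.ne_zero 0
  obtain ⟨σ, hσ, hdv⟩ := hd.exists_apply_fst hv
  obtain ⟨t, μ, hμ, hdw⟩ : d w ∈ HalfPlane v' w' :=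
    hd.1 ▸ Set.mem_image_of_mem d ⟨0, 1, zero_le_one, by simp⟩
  refine ⟨μ, hμ.lt_of_ne ?_, t, by rw [hdw, add_comm]⟩
  rintro rfl
  refine (LinearIndependent.pair_iff' hv).1 hvw (t / σ) (d.injective ?_)
  rw [map_smul, hdv, hdw, smul_smul, div_mul_cancel₀ t hσ.ne']
  simp

end Flags

section HalfTurns

variable {V : Type*} [AddCommGroup V] [Module ℝ V] {D : Subgroup (V ≃ₗ[ℝ] V)}

theorem linearIndependent_pair_of_apply_eq_neg {F : Type*} [FunLike F V V]
    [LinearMapClass F ℝ V V] (f : F) {x y : V} (hx : x ≠ 0) (hy : y ≠ 0) (hfx : f x = x)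
    (hfy : f y = -y) : LinearIndependent ℝ ![x, y] := by
  have := IsAddTorsionFree.of_isTorsionFree ℝ V
  refine (LinearIndependent.pair_iff' hx).2 fun a hay => hy (neg_eq_self.1 ?_)
  rw [← hfy, ← hay, map_smul, hfx]

namespace IsRotationGroup

theorem eq_of_mapsFlag (hD : IsRotationGroup D) {v w v' w' : V}
    (hvw : LinearIndependent ℝ ![v, w]) (hvw' : LinearIndependent ℝ ![v', w'])
    {d d' : V ≃ₗ[ℝ] V} (hd : d ∈ D) (hd' : d' ∈ D)
    (h : MapsFlag d v w v' w') (h' : MapsFlag d' v w v' w') : d = d' :=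
  (hD v w v' w' hvw hvw').unique ⟨hd, h⟩ ⟨hd', h'⟩

theorem eq_one_of_mapsFlag (hD : IsRotationGroup D) {v w : V}
    (hvw : LinearIndependent ℝ ![v, w]) {d : V ≃ₗ[ℝ] V} (hd : d ∈ D) (h : MapsFlag d v w v w) :
    d = 1 :=
  hD.eq_of_mapsFlag hvw hvw hd (one_mem D) h
    (mapsFlag_of_apply one_pos one_pos 0 (by simp) (by simp))

theorem exists_eq_smul_of_apply_eq_self (hD : IsRotationGroup D) {d : V ≃ₗ[ℝ] V} (hd : d ∈ D)
    (hd1 : d ≠ 1) {x u : V} (hx : x ≠ 0) (hdx : d x = x) (hdu : d u = u) :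
    ∃ t : ℝ, u = t • x := by
  by_contra! hu
  have hxu : LinearIndependent ℝ ![x, u] :=
    (LinearIndependent.pair_iff' hx).2 fun t ht => hu t ht.symm
  exact hd1 (hD.eq_one_of_mapsFlag hxu hd
    (mapsFlag_of_apply one_pos one_pos 0 (by simpa) (by simpa)))

end IsRotationGroup

structure IsHalfTurn (D : Subgroup (V ≃ₗ[ℝ] V)) (x : V) (h : V ≃ₗ[ℝ] V) : Prop where
  mem : h ∈ D
  ne_zero : x ≠ 0
  apply_self : h x = x
  exists_add_eq_smul : ∀ z, ∃ t : ℝ, h z + z = t • x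

namespace IsHalfTurn

variable {x : V} {h : V ≃ₗ[ℝ] V}

theorem smul (H : IsHalfTurn D x h) {σ : ℝ} (hσ : σ ≠ 0) : IsHalfTurn D (σ • x) h where
  mem := H.mem
  ne_zero := smul_ne_zero hσ H.ne_zero
  apply_self := by rw [map_smul, H.apply_self]
  exists_add_eq_smul z := by
    obtain ⟨t, ht⟩ := H.exists_add_eq_smul z
    exact ⟨t / σ, by rw [ht, smul_smul, div_mul_cancel₀ t hσ]⟩

theorem conj (H : IsHalfTurn D x h) {g : V ≃ₗ[ℝ] V} (hg : g ∈ D) :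
    IsHalfTurn D (g x) (g * h * g⁻¹) where
  mem := mul_mem (mul_mem hg H.mem) (inv_mem hg)
  ne_zero := by simpa using H.ne_zero
  apply_self := by simp [H.apply_self]
  exists_add_eq_smul z := by
    obtain ⟨t, ht⟩ := H.exists_add_eq_smul (g⁻¹ z)
    refine ⟨t, ?_⟩
    simpa using congr(g $ht)

theorem add_eq_two {v w : V} {s : V ≃ₗ[ℝ] V} (Hs : IsHalfTurn D (v + w) s)
    {γ δ : ℝ} (hγ : s v + v = γ • (v + w)) (hδ : s w + w = δ • (v + w)) : γ + δ = 2 := by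
  have hs := Hs.apply_self
  rw [map_add] at hs
  refine smul_left_injective ℝ Hs.ne_zero ?_
  change (γ + δ) • (v + w) = (2 : ℝ) • (v + w)
  rw [add_smul, ← hγ, ← hδ]
  linear_combination (norm := module) hs

theorem mapsFlag (H : IsHalfTurn D x h) (y : V) : MapsFlag h x y x (-y) := by
  obtain ⟨t, ht⟩ := H.exists_add_eq_smul y
  refine mapsFlag_of_apply one_pos one_pos t (by rw [H.apply_self, one_smul]) ?_
  rw [← ht]
  module

theorem unique (hD : IsRotationGroup D) (hdim : finrank ℝ V = 3) {h' : V ≃ₗ[ℝ] V}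
    (H : IsHalfTurn D x h) (H' : IsHalfTurn D x h') : h = h' := by
  obtain ⟨y, hxy⟩ := exists_linearIndependent_pair_of_one_lt_finrank (R := ℝ) (by omega) H.ne_zero
  exact hD.eq_of_mapsFlag hxy (LinearIndependent.pair_neg_right_iff.2 hxy) H.mem H'.mem
    (H.mapsFlag y) (H'.mapsFlag y)

theorem commute (hD : IsRotationGroup D) (hdim : finrank ℝ V = 3) (H : IsHalfTurn D x h)
    {g : V ≃ₗ[ℝ] V} (hg : g ∈ D) {l : ℝ} (hl : l ≠ 0) (hgx : g x = l • x) : Commute g h := by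
  have hconj : g * h * g⁻¹ = h := by
    have := (H.conj hg).smul (inv_ne_zero hl)
    rw [hgx, smul_smul, inv_mul_cancel₀ hl, one_smul] at this
    exact this.unique hD hdim H
  exact mul_inv_eq_iff_eq_mul.1 hconj

theorem apply_eq_neg (hD : IsRotationGroup D) (hdim : finrank ℝ V = 3) (H : IsHalfTurn D x h)
    {y : V} {k : V ≃ₗ[ℝ] V} (K : IsHalfTurn D y k) (hhy : h y = -y) : k x = -x := by
  have hkx : h (k x) = k x := by
    simpa [H.apply_self] using DFunLike.congr_fun (K.commute hD hdim H.mem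
      (neg_ne_zero.2 one_ne_zero) (by rw [hhy, neg_one_smul])).eq x
  obtain ⟨t, ht⟩ := K.exists_add_eq_smul x
  have hneg := congr(h $ht)
  rw [map_add, hkx, H.apply_self, ht, map_smul, hhy, smul_neg, ← neg_smul] at hneg
  have ht0 : t = 0 := by linarith [smul_left_injective ℝ K.ne_zero hneg]
  rw [ht0, zero_smul] at ht
  exact eq_neg_of_add_eq_zero_left ht

end IsHalfTurn

namespace IsRotationGroup

theorem exists_isHalfTurn (hD : IsRotationGroup D) (hdim : finrank ℝ V = 3) {x : V}
    (hx : x ≠ 0) : ∃ h, IsHalfTurn D x h := by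
  obtain ⟨y, hxy⟩ := exists_linearIndependent_pair_of_one_lt_finrank (R := ℝ) (by omega) hx
  obtain ⟨h, ⟨hh, hflag : MapsFlag h x y x (-y)⟩, -⟩ :=
    hD x y x (-y) hxy (LinearIndependent.pair_neg_right_iff.2 hxy)
  obtain ⟨σ, hσ, hhx⟩ := hflag.exists_apply_fst hx
  obtain ⟨μ, hμ, t, hhy⟩ := hflag.exists_apply_snd hxy
  have hsq : h * h = 1 := hD.eq_one_of_mapsFlag hxy (mul_mem hh hh)
    (mapsFlag_of_apply (mul_pos hσ hσ) (mul_pos hμ hμ) (t * σ - μ * t)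
      (by simp [hhx, smul_smul])
      (by simp only [LinearEquiv.mul_apply, hhy, hhx, map_add, map_smul, map_neg]; module))
  have hσ1 : σ = 1 := by
    have : (σ * σ) • x = (1 : ℝ) • x := by simpa [hhx, smul_smul] using congr($hsq x)
    nlinarith [smul_left_injective ℝ hx this]
  have hhx' : h x = x := by rw [hhx, hσ1, one_smul]
  have hh1 : h ≠ 1 := by
    rintro rfl
    have := (hxy.eq_of_pair (s := 0) (t := 1) (s' := t) (t' := -μ)
      (by simpa [add_comm] using hhy)).2
    linarith
  -- `h z + z` is fixed by the involution `h ≠ 1`, hence lies on its axis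
  refine ⟨h, hh, hx, hhx', fun z => hD.exists_eq_smul_of_apply_eq_self hh hh1 hx hhx' ?_⟩
  rw [map_add, ← LinearEquiv.mul_apply, hsq]
  exact add_comm _ _

theorem isHalfTurn_of_apply (hD : IsRotationGroup D) (hdim : finrank ℝ V = 3) {v w : V}
    (hvw : LinearIndependent ℝ ![v, w]) {r : V ≃ₗ[ℝ] V} (hr : r ∈ D) (hrv : r v = v)
    (hrw : r w = -w) : IsHalfTurn D v r := by
  obtain ⟨h, H⟩ := hD.exists_isHalfTurn hdim (hvw.ne_zero 0)
  rwa [hD.eq_of_mapsFlag hvw (LinearIndependent.pair_neg_right_iff.2 hvw) hr H.mem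
    (mapsFlag_of_apply one_pos one_pos 0 (by rw [hrv, one_smul]) (by simp [hrw]))
    (H.mapsFlag w)]

end IsRotationGroup

end HalfTurns

section NegSpace

variable {V : Type*} [AddCommGroup V] [Module ℝ V] {D : Subgroup (V ≃ₗ[ℝ] V)}

def negSpace (h : V ≃ₗ[ℝ] V) : Submodule ℝ V :=
  Module.End.eigenspace (h : Module.End ℝ V) (-1)

theorem mem_negSpace {h : V ≃ₗ[ℝ] V} {u : V} : u ∈ negSpace h ↔ h u = -u := by
  simp [negSpace]

namespace IsHalfTurn

variable {x : V} {h : V ≃ₗ[ℝ] V}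

theorem finrank_negSpace (hdim : finrank ℝ V = 3) (H : IsHalfTurn D x h) :
    finrank ℝ (negSpace h) = 2 := by
  have : FiniteDimensional ℝ V := .of_finrank_pos (by omega)
  set φ : Module.End ℝ V := (h : Module.End ℝ V) - (-1 : ℝ) • 1
  have hφ (z : V) : φ z = h z + z := by simp [φ]
  have hker : negSpace h = LinearMap.ker φ := Module.End.eigenspace_def
  have hrange : finrank ℝ (LinearMap.range φ) ≤ 1 := by
    refine (Submodule.finrank_mono ?_).trans (finrank_span_singleton H.ne_zero).le
    rintro _ ⟨z, rfl⟩
    obtain ⟨t, ht⟩ := H.exists_add_eq_smul z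
    exact Submodule.mem_span_singleton.2 ⟨t, by rw [hφ, ht]⟩
  have := IsAddTorsionFree.of_isTorsionFree ℝ V
  have hx : x ∉ negSpace h := by
    rw [mem_negSpace, H.apply_self, self_eq_neg]
    exact H.ne_zero
  have hlt := Submodule.finrank_lt fun htop : negSpace h = ⊤ => hx (htop ▸ Submodule.mem_top)
  have := LinearMap.finrank_range_add_finrank_ker φ
  rw [← hker] at this
  omega

theorem exists_basis_negSpace (hdim : finrank ℝ V = 3) (H : IsHalfTurn D x h) :
    ∃ e : Fin 2 → V, LinearIndependent ℝ e ∧ Submodule.span ℝ (Set.range e) = negSpace h := by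
  have : FiniteDimensional ℝ V := .of_finrank_pos (by omega)
  let b := Module.finBasisOfFinrankEq ℝ (negSpace h) (H.finrank_negSpace hdim)
  refine ⟨(negSpace h).subtype ∘ b, b.linearIndependent.map' _ (negSpace h).ker_subtype, ?_⟩
  rw [Set.range_comp, Submodule.span_image, b.span_eq, Submodule.map_top, Submodule.range_subtype]

theorem exists_ne_zero_apply_eq_neg (hdim : finrank ℝ V = 3) (H : IsHalfTurn D x h) {y : V}
    {k : V ≃ₗ[ℝ] V} (K : IsHalfTurn D y k) : ∃ z ≠ 0, h z = -z ∧ k z = -z := by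
  have : FiniteDimensional ℝ V := .of_finrank_pos (by omega)
  have hsum := Submodule.finrank_sup_add_finrank_inf_eq (negSpace h) (negSpace k)
  have hle := Submodule.finrank_le (negSpace h ⊔ negSpace k)
  rw [H.finrank_negSpace hdim, K.finrank_negSpace hdim] at hsum
  have hne : negSpace h ⊓ negSpace k ≠ ⊥ := by
    intro hbot
    rw [hbot, finrank_bot] at hsum
    omega
  obtain ⟨z, hz, hz0⟩ := Submodule.exists_mem_ne_zero_of_ne_bot hne
  exact ⟨z, hz0, mem_negSpace.1 hz.1, mem_negSpace.1 hz.2⟩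

end IsHalfTurn

end NegSpace

section MapsByMatrix

open Matrix

variable {R M ι : Type*} [CommRing R] [AddCommGroup M] [Module R M] [Fintype ι]

def MapsByMatrix (f : Module.End R M) (e : ι → M) (A : Matrix ι ι R) : Prop :=
  ∀ j, f (e j) = ∑ i, A i j • e i

variable {f g : Module.End R M} {e : ι → M} {A B : Matrix ι ι R}

theorem exists_mapsByMatrix (hf : ∀ j, f (e j) ∈ Submodule.span R (Set.range e)) :
    ∃ A, MapsByMatrix f e A := by
  choose c hc using fun j => (Submodule.mem_span_range_iff_exists_fun R).1 (hf j)
  exact ⟨Matrix.of fun i j => c j i, fun j => (hc j).symm⟩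

theorem mapsByMatrix_one [DecidableEq ι] : MapsByMatrix 1 e (1 : Matrix ι ι R) := fun j => by
  simp [Matrix.one_apply]

namespace MapsByMatrix

theorem apply_sum (hA : MapsByMatrix f e A) (u : ι → R) :
    f (∑ j, u j • e j) = ∑ i, (A *ᵥ u) i • e i := by
  calc f (∑ j, u j • e j) = ∑ j, u j • ∑ i, A i j • e i := by
        simp only [map_sum, map_smul, hA _]
    _ = ∑ i, (A *ᵥ u) i • e i := by
        simp only [Finset.smul_sum, smul_smul, Matrix.mulVec, dotProduct, Finset.sum_smul]
        rw [Finset.sum_comm]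
        simp only [mul_comm]

theorem mul (hA : MapsByMatrix f e A) (hB : MapsByMatrix g e B) :
    MapsByMatrix (g * f) e (B * A) := fun j => by
  rw [Module.End.mul_apply, hA j, hB.apply_sum]
  rfl

theorem eq (he : LinearIndependent R e) (hA : MapsByMatrix f e A) (hB : MapsByMatrix f e B) :
    A = B := by
  ext i j
  have hsum : ∑ k, (A k j - B k j) • e k = 0 := by
    simp [sub_smul, Finset.sum_sub_distrib, ← hA j, ← hB j]
  exact sub_eq_zero.1 (Fintype.linearIndependent_iff.1 he _ hsum i)

theorem det_ne_zero [IsDomain R] [DecidableEq ι] (he : LinearIndependent R e)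
    (hf : Function.Injective f) (hA : MapsByMatrix f e A) : A.det ≠ 0 := by
  intro h0
  obtain ⟨u, hu0, hu⟩ := Matrix.exists_mulVec_eq_zero_iff.2 h0
  refine hu0 (funext (Fintype.linearIndependent_iff.1 he u (hf ?_)))
  simp [hA.apply_sum, hu]

end MapsByMatrix

end MapsByMatrix

open Matrix in
theorem Matrix.exists_mulVec_eq_smul_of_det_neg {A : Matrix (Fin 2) (Fin 2) ℝ} (hA : A.det < 0) :
    ∃ u ≠ 0, ∃ μ : ℝ, 0 < μ ∧ A *ᵥ u = μ • u := by
  rw [Matrix.det_fin_two] at hA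
  set T := A 0 0 + A 1 1
  set Δ := A 0 0 * A 1 1 - A 0 1 * A 1 0
  set s := √(T ^ 2 - 4 * Δ)
  have hs : s ^ 2 = T ^ 2 - 4 * Δ := Real.sq_sqrt (by nlinarith)
  set μ := (T + s) / 2
  have hμ : 0 < μ := by
    have := Real.sqrt_nonneg (T ^ 2 - 4 * Δ)
    simp only [μ]
    nlinarith
  have hchar : μ ^ 2 - T * μ + Δ = 0 := by simp only [μ]; nlinarith
  -- both candidates lie in the kernel of `A - μ • 1`; they vanish together only if `A = μ • 1`
  by_cases h : A 0 1 = 0 ∧ μ - A 0 0 = 0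
  · refine ⟨![μ - A 1 1, A 1 0], fun h0 => ?_, μ, hμ, ?_⟩
    · have h₀ := congr_fun h0 0
      have h₁ := congr_fun h0 1
      simp only [Matrix.cons_val_zero, Matrix.cons_val_one, Pi.zero_apply] at h₀ h₁
      nlinarith [h.1, h.2]
    · simp only [Matrix.mulVec_fin_two, Matrix.smul_vec2, Matrix.cons_val_zero,
        Matrix.cons_val_one, smul_eq_mul]
      refine Matrix.vec2_eq ?_ ?_ <;> nlinarith [h.1, h.2]
  · refine ⟨![A 0 1, μ - A 0 0], fun h0 => h ⟨?_, ?_⟩, μ, hμ, ?_⟩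
    · simpa using congr_fun h0 0
    · simpa using congr_fun h0 1
    · simp only [Matrix.mulVec_fin_two, Matrix.smul_vec2, Matrix.cons_val_zero,
        Matrix.cons_val_one, smul_eq_mul]
      refine Matrix.vec2_eq ?_ ?_ <;> nlinarith

theorem MapsByMatrix.exists_apply_eq_smul_of_det_neg {V : Type*} [AddCommGroup V] [Module ℝ V]
    {f : Module.End ℝ V} {e : Fin 2 → V} {A : Matrix (Fin 2) (Fin 2) ℝ}
    (he : LinearIndependent ℝ e) (hA : MapsByMatrix f e A) (hdet : A.det < 0) :
    ∃ y ∈ Submodule.span ℝ (Set.range e), y ≠ 0 ∧ ∃ μ : ℝ, 0 < μ ∧ f y = μ • y := by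
  obtain ⟨u, hu0, μ, hμ, hu⟩ := Matrix.exists_mulVec_eq_smul_of_det_neg hdet
  refine ⟨∑ i, u i • e i, (Submodule.mem_span_range_iff_exists_fun ℝ).2 ⟨u, rfl⟩,
    fun h0 => hu0 (funext (Fintype.linearIndependent_iff.1 he u h0)), μ, hμ, ?_⟩
  rw [hA.apply_sum, hu, Finset.smul_sum]
  simp only [Pi.smul_apply, smul_eq_mul, smul_smul]

section Rigidity

variable {V : Type*} [AddCommGroup V] [Module ℝ V] {D : Subgroup (V ≃ₗ[ℝ] V)}

namespace IsHalfTurn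

variable {x : V} {h : V ≃ₗ[ℝ] V}

theorem exists_mapsByMatrix (hD : IsRotationGroup D) (hdim : finrank ℝ V = 3)
    (H : IsHalfTurn D x h) {e : Fin 2 → V} (hspan : Submodule.span ℝ (Set.range e) = negSpace h)
    {g : V ≃ₗ[ℝ] V} (hg : g ∈ D) {l : ℝ} (hl : l ≠ 0) (hgx : g x = l • x) :
    ∃ A, MapsByMatrix (g : Module.End ℝ V) e A := by
  refine _root_.exists_mapsByMatrix fun j => ?_
  have hej : h (e j) = -e j := mem_negSpace.1 (hspan ▸ Submodule.subset_span ⟨j, rfl⟩)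
  rw [hspan, mem_negSpace]
  simpa [hej] using (DFunLike.congr_fun (H.commute hD hdim hg hl hgx).eq (e j)).symm

theorem det_pos_of_apply_eq_smul (hD : IsRotationGroup D) (H : IsHalfTurn D x h)
    {e : Fin 2 → V} (he : LinearIndependent ℝ e)
    (hspan : Submodule.span ℝ (Set.range e) = negSpace h) {g : V ≃ₗ[ℝ] V} (hg : g ∈ D) {l : ℝ}
    (hl : 0 < l) (hgx : g x = l • x) {A : Matrix (Fin 2) (Fin 2) ℝ}
    (hA : MapsByMatrix (g : Module.End ℝ V) e A) : 0 < A.det := by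
  have hdet := hA.det_ne_zero he g.injective
  by_contra hneg
  obtain ⟨y, hy, hy0, μ, hμ, hgy⟩ :=
    hA.exists_apply_eq_smul_of_det_neg he ((not_lt.1 hneg).lt_of_ne hdet)
  have hxy := linearIndependent_pair_of_apply_eq_neg h H.ne_zero hy0 H.apply_self
    (mem_negSpace.1 (hspan ▸ hy))
  have hg1 : g = 1 := hD.eq_one_of_mapsFlag hxy hg
    (mapsFlag_of_apply hl hμ 0 hgx (by simpa using hgy))
  subst hg1
  rw [hA.eq he mapsByMatrix_one, Matrix.det_one] at hneg
  exact hneg one_pos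

theorem det_neg_of_apply_eq_neg_smul (hD : IsRotationGroup D) (hdim : finrank ℝ V = 3)
    (H : IsHalfTurn D x h) {e : Fin 2 → V} (he : LinearIndependent ℝ e)
    (hspan : Submodule.span ℝ (Set.range e) = negSpace h) {q : V ≃ₗ[ℝ] V} (hq : q ∈ D) {l : ℝ}
    (hl : 0 < l) (hqx : q x = -(l • x)) {A : Matrix (Fin 2) (Fin 2) ℝ}
    (hA : MapsByMatrix (q : Module.End ℝ V) e A) : A.det < 0 := by
  have he0 : h (e 0) = -e 0 := mem_negSpace.1 (hspan ▸ Submodule.subset_span ⟨0, rfl⟩)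
  obtain ⟨k, K⟩ := hD.exists_isHalfTurn hdim (he.ne_zero 0)
  obtain ⟨t, ht⟩ := K.exists_add_eq_smul (e 1)
  have hK : MapsByMatrix (k : Module.End ℝ V) e !![1, t; 0, -1] := by
    intro j
    fin_cases j
    · simp [K.apply_self]
    · simp [← ht]
  have hkx : k x = -x := H.apply_eq_neg hD hdim K he0
  -- `q * k` fixes the ray of `x`, while `k` acts on the plane with determinant `-1`
  have hpos := H.det_pos_of_apply_eq_smul hD he hspan (mul_mem hq K.mem) hl (by simp [hkx, hqx])
    (by rw [LinearEquiv.coe_toLinearMap_mul]; exact hK.mul hA)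
  rw [Matrix.det_mul, Matrix.det_fin_two_of] at hpos
  linarith

end IsHalfTurn

namespace IsRotationGroup

theorem mul_self_eq_one_of_apply_eq_neg_smul (hD : IsRotationGroup D)
    (hdim : finrank ℝ V = 3) {q : V ≃ₗ[ℝ] V} (hq : q ∈ D) {x : V} (hx : x ≠ 0) {l : ℝ}
    (hl : 0 < l) (hqx : q x = -(l • x)) : q * q = 1 := by
  obtain ⟨h, H⟩ := hD.exists_isHalfTurn hdim hx
  obtain ⟨e, he, hspan⟩ := H.exists_basis_negSpace hdim
  obtain ⟨A, hA⟩ := H.exists_mapsByMatrix hD hdim hspan hq (neg_ne_zero.2 hl.ne')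
    (by rw [hqx, neg_smul])
  -- an eigenvector `y` of `q` in the plane gives a flag `x, y` fixed by `q * q`
  obtain ⟨y, hy, hy0, μ, hμ, hqy⟩ :=
    hA.exists_apply_eq_smul_of_det_neg he
      (H.det_neg_of_apply_eq_neg_smul hD hdim he hspan hq hl hqx hA)
  have hxy := linearIndependent_pair_of_apply_eq_neg h hx hy0 H.apply_self
    (mem_negSpace.1 (hspan ▸ hy))
  exact hD.eq_one_of_mapsFlag hxy (mul_mem hq hq)
    (mapsFlag_of_apply (mul_pos hl hl) (mul_pos hμ hμ) 0 (by simp [hqx, smul_smul])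
      (by rw [LinearEquiv.coe_coe] at hqy; simp [hqy, smul_smul]))

theorem eq_one_of_apply_eq_smul (hD : IsRotationGroup D) (hdim : finrank ℝ V = 3)
    {g : V ≃ₗ[ℝ] V} (hg : g ∈ D) {x : V} (hx : x ≠ 0) {l : ℝ} (hl : 0 < l)
    (hgx : g x = l • x) : l = 1 := by
  obtain ⟨h, H⟩ := hD.exists_isHalfTurn hdim hx
  obtain ⟨e, he, hspan⟩ := H.exists_basis_negSpace hdim
  obtain ⟨k, K⟩ := hD.exists_isHalfTurn hdim (he.ne_zero 0)
  have hkx : k x = -x :=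
    H.apply_eq_neg hD hdim K (mem_negSpace.1 (hspan ▸ Submodule.subset_span ⟨0, rfl⟩))
  have hsq := hD.mul_self_eq_one_of_apply_eq_neg_smul hdim (mul_mem hg K.mem) hx hl
    (by simp [hkx, hgx])
  have : (l * l) • x = (1 : ℝ) • x := by simpa [hkx, hgx, smul_smul] using congr($hsq x)
  nlinarith [smul_left_injective ℝ hx this]

end IsRotationGroup

end Rigidity

namespace IsRotationGroup

variable {V : Type*} [AddCommGroup V] [Module ℝ V] {D : Subgroup (V ≃ₗ[ℝ] V)}

theorem eq_of_apply_eq_smul (hD : IsRotationGroup D) (hdim : finrank ℝ V = 3) {n : V}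
    (hn : n ≠ 0) {d d' : V ≃ₗ[ℝ] V} (hd : d ∈ D) (hd' : d' ∈ D) {x : V} {τ τ' : ℝ}
    (h : d x = τ • n) (h' : d' x = τ' • n) (hτ : 0 ≤ τ) (hτ' : 0 ≤ τ') : τ = τ' := by
  rcases eq_or_ne x 0 with rfl | hx
  · rw [map_zero] at h h'
    rw [(smul_eq_zero.1 h.symm).resolve_right hn, (smul_eq_zero.1 h'.symm).resolve_right hn]
  have hτ0 : 0 < τ := hτ.lt_of_ne (by rintro rfl; simp [hx] at h)
  have hτ'0 : 0 < τ' := hτ'.lt_of_ne (by rintro rfl; simp [hx] at h')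
  have hdn : d⁻¹ n = τ⁻¹ • x := d.injective (by simp [h, smul_smul, hτ0.ne'])
  have := hD.eq_one_of_apply_eq_smul hdim (mul_mem hd' (inv_mem hd)) hn
    (mul_pos (inv_pos.2 hτ0) hτ'0) (by simp [hdn, h', smul_smul])
  field_simp at this
  linarith

theorem exists_mul_self_eq_one_apply_eq_smul (hD : IsRotationGroup D) (hdim : finrank ℝ V = 3)
    {x y : V} (hx : x ≠ 0) (hy : y ≠ 0) :
    ∃ k ∈ D, k * k = 1 ∧ ∃ β : ℝ, 0 < β ∧ k x = β • y := by
  obtain ⟨tx, Hx⟩ := hD.exists_isHalfTurn hdim hx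
  obtain ⟨ty, Hy⟩ := hD.exists_isHalfTurn hdim hy
  obtain ⟨z, hz, hxz, hyz⟩ := Hx.exists_ne_zero_apply_eq_neg hdim Hy
  obtain ⟨tz, Hz⟩ := hD.exists_isHalfTurn hdim hz
  have hzx : tz x = -x := Hx.apply_eq_neg hD hdim Hz hxz
  have hzy : tz y = -y := Hy.apply_eq_neg hD hdim Hz hyz
  have hindx := linearIndependent_pair_of_apply_eq_neg tz hz hx Hz.apply_self hzx
  have hindy := linearIndependent_pair_of_apply_eq_neg tz hz hy Hz.apply_self hzy
  -- `e` turns about `z`, taking the ray of `x` to that of `y`; then `k = e * tx` reverses `z`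
  obtain ⟨e, ⟨he, hflag : MapsFlag e z x z y⟩, -⟩ := hD z x z y hindx hindy
  obtain ⟨τ, hτ, hez⟩ := hflag.exists_apply_fst hz
  obtain ⟨β, hβ, α, hex⟩ := hflag.exists_apply_snd hindx
  -- `e` commutes with the half-turn about `z`, which therefore reverses `e x` as it reverses `x`
  have hα : α = 0 := by
    have hcomm := DFunLike.congr_fun (Hz.commute hD hdim he hτ.ne' hez).eq x
    simp only [LinearEquiv.mul_apply, hzx, map_neg, hex, map_add, map_smul, hzy,
      Hz.apply_self] at hcomm
    have := (hindy.eq_of_pair (s := -α) (t := -β) (s' := α) (t' := -β)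
      (by linear_combination (norm := module) hcomm)).1
    linarith
  refine ⟨e * tx, mul_mem he Hx.mem,
    hD.mul_self_eq_one_of_apply_eq_neg_smul hdim (mul_mem he Hx.mem) hz hτ (by simp [hxz, hez]),
    β, hβ, by simp [Hx.apply_self, hex, hα]⟩

theorem mul_sq_eq_two_mul_sq (hD : IsRotationGroup D) (hdim : finrank ℝ V = 3) {v w : V}
    {r s : V ≃ₗ[ℝ] V} (Hr : IsHalfTurn D v r) (hrw : r w = -w) (Hs : IsHalfTurn D (v + w) s)
    {γ : ℝ} (hγ : s v + v = γ • (v + w)) {n : V} (hn : n ≠ 0) {dv ds : V ≃ₗ[ℝ] V}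
    (hdv : dv ∈ D) (hds : ds ∈ D) {a c : ℝ} (ha : 0 ≤ a) (hc : 0 ≤ c) (hdva : dv v = a • n)
    (hdsc : ds (v + w) = c • n) : γ * c ^ 2 = 2 * a ^ 2 := by
  obtain ⟨k, hk, hkk, β, hβ, hks⟩ :=
    hD.exists_mul_self_eq_one_apply_eq_smul hdim Hs.ne_zero Hr.ne_zero
  have hkv : β • k v = v + w := by
    rw [← map_smul, ← hks, ← LinearEquiv.mul_apply, hkk]
    rfl
  -- `k` exchanges the rays of `v + w` and `v`, so it conjugates `r` into `s`
  have hconj : k * r * k⁻¹ = s := by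
    have := (Hr.conj hk).smul hβ.ne'
    rw [hkv] at this
    exact this.unique hD hdim Hs
  have hskw : s (k w) = -k w := by
    rw [← hconj]
    simp [hrw]
  have hkw : β • k w = β ^ 2 • v - (v + w) := by
    have : k w = k (v + w) - k v := by rw [← map_sub, add_sub_cancel_left]
    rw [this, smul_sub, hks, hkv, smul_smul, sq]
  -- `s` reverses `β • k w`, fixes `v + w` and sends `v` to `γ • (v + w) - v`
  have hcoeff : (β ^ 2 * γ - 2) • (v + w) = 0 := by
    have h0 : s (β • k w) + β • k w = 0 := by rw [map_smul, hskw, smul_neg, neg_add_cancel]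
    rw [hkw, map_sub, map_smul, Hs.apply_self] at h0
    rw [← h0, sub_smul, mul_smul, ← hγ]
    module
  have hβγ : β ^ 2 * γ = 2 := sub_eq_zero.1 ((smul_eq_zero.1 hcoeff).resolve_right Hs.ne_zero)
  have hca : c = β * a := hD.eq_of_apply_eq_smul hdim hn hds (mul_mem hdv hk) hdsc
    (by simp [hks, hdva, smul_smul]) hc (by positivity)
  rw [hca]
  linear_combination a ^ 2 * hβγ

end IsRotationGroup

theorem stmt16 {V : Type*} [AddCommGroup V] [Module ℝ V]
    (hdim : Module.finrank ℝ V = 3)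
    (D : Subgroup (V ≃ₗ[ℝ] V)) (hD : IsRotationGroup D)
    (v w : V) (hperp : ∃ r : V ≃ₗ[ℝ] V, r ∈ D ∧ r v = v ∧ r w = -w)
    (n : V) (hn : n ≠ 0) (a b c : ℝ)
    (ha : 0 ≤ a) (hb : 0 ≤ b) (hc : 0 ≤ c)
    (dv : V ≃ₗ[ℝ] V) (hdv : dv ∈ D) (hdva : dv v = a • n)
    (dw : V ≃ₗ[ℝ] V) (hdw : dw ∈ D) (hdwb : dw w = b • n)
    (ds : V ≃ₗ[ℝ] V) (hds : ds ∈ D) (hdsc : ds (v + w) = c • n) :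
    a ^ 2 + b ^ 2 = c ^ 2 := by
  obtain ⟨r, hr, hrv, hrw⟩ := hperp
  rcases eq_or_ne v 0 with rfl | hv
  · rw [hD.eq_of_apply_eq_smul hdim hn hdv (one_mem D) hdva (by simp) ha le_rfl,
      hD.eq_of_apply_eq_smul hdim hn hdw hds hdwb (by simpa using hdsc) hb hc]
    ring
  rcases eq_or_ne w 0 with rfl | hw
  · rw [hD.eq_of_apply_eq_smul hdim hn hdw (one_mem D) hdwb (by simp) hb le_rfl,
      hD.eq_of_apply_eq_smul hdim hn hdv hds hdva (by simpa using hdsc) ha hc]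
    ring
  have hvw := linearIndependent_pair_of_apply_eq_neg r hv hw hrv hrw
  have Hr := hD.isHalfTurn_of_apply hdim hvw hr hrv hrw
  obtain ⟨k, Hk⟩ := hD.exists_isHalfTurn hdim hw
  have hvw0 : v + w ≠ 0 := fun h0 => one_ne_zero
    (LinearIndependent.pair_iff.1 hvw 1 1 (by rwa [one_smul, one_smul])).1
  obtain ⟨s, Hs⟩ := hD.exists_isHalfTurn hdim hvw0
  obtain ⟨γ, hγ⟩ := Hs.exists_add_eq_smul v
  obtain ⟨δ, hδ⟩ := Hs.exists_add_eq_smul w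
  have hγδ := Hs.add_eq_two hγ hδ
  have hγc := hD.mul_sq_eq_two_mul_sq hdim Hr hrw Hs hγ hn hdv hds ha hc hdva hdsc
  rw [add_comm v w] at Hs hδ hdsc
  have hδc := hD.mul_sq_eq_two_mul_sq hdim Hk (Hr.apply_eq_neg hD hdim Hk hrw) Hs hδ hn hdw hds
    hb hc hdwb hdsc
  linear_combination (c ^ 2 * hγδ - hγc - hδc) / 2
end
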